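/- arXiv:2501.06380 — 3 statements merged into one kernel-verified Lean document; each statement's English description precedes it below -/
import Mathlib

section
/- Let (X, B, ν, T) be an invertible ergodic measure-preserving system, Y ⊂ X with ν(Y) > 0, T̃ the first return map to Y with return time r: Y → ℕ, f: X → ℝ measurable, and f̂(x) = Σ_{j=0}^{r(x)−1} f(Tʲx) the induced cocycle on Y. If there exists ĥ: Y → ℝ with f̂(x) = ĥ(T̃x) − ĥ(x) for all x ∈ Y, then there exists h: X → ℝ with f(y) = h(Ty) − h(y) for ν-almost every y ∈ X. -/
/-!
Put `h x = ĥ (Tᵐ x) - S_m f x`, where `m` is the first entrance time of `x` into `Y` and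
`S_m f` the Birkhoff sum. Off `Y` the entrance time drops by one along `T`, which gives
`h (T x) - h x = f x` directly; on `Y` the entrance time of `T x` is `r x - 1`, and the identity
becomes the induced coboundary equation `S_{r x} f x = ĥ (T̃ x) - ĥ x`. The points that
eventually enter `Y` form a `T`-invariant set containing `Y`, hence of full measure by ergodicity.
-/

open MeasureTheory Function

section EntranceTransfer

variable {α G : Type*} [AddCommGroup G] (T : α → α) (Y : Set α) (f hhat : α → G)

open Classical in
noncomputable def entranceTransfer (x : α) : G :=
  if hx : ∃ m, T^[m] x ∈ Y then
    hhat (T^[Nat.find hx] x) - birkhoffSum T f (Nat.find hx) x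
  else 0

variable {T Y}

theorem entranceTransfer_eq {x : α} {n : ℕ} (hn : T^[n] x ∈ Y) (hmin : ∀ k < n, T^[k] x ∉ Y) :
    entranceTransfer T Y f hhat x = hhat (T^[n] x) - birkhoffSum T f n x := by
  classical
  have hx : ∃ m, T^[m] x ∈ Y := ⟨n, hn⟩
  rw [entranceTransfer, dif_pos hx, (Nat.find_eq_iff hx).2 ⟨hn, hmin⟩]

theorem entranceTransfer_of_mem {x : α} (hx : x ∈ Y) :
    entranceTransfer T Y f hhat x = hhat x := by
  simpa using entranceTransfer_eq f hhat (n := 0) hx (by simp)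

theorem entranceTransfer_apply_sub_of_notMem {x : α} (hx : x ∉ Y)
    (hT : ∃ m, T^[m] (T x) ∈ Y) :
    entranceTransfer T Y f hhat (T x) - entranceTransfer T Y f hhat x = f x := by
  classical
  have hmin : ∀ k < Nat.find hT + 1, T^[k] x ∉ Y := by
    rintro (_ | k) hk
    · exact hx
    · exact Nat.find_min hT (by omega)
  rw [entranceTransfer_eq f hhat (Nat.find_spec hT) fun k hk => Nat.find_min hT hk,
    entranceTransfer_eq f hhat (n := Nat.find hT + 1) (Nat.find_spec hT) hmin,
    iterate_succ_apply, birkhoffSum_succ']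
  abel

theorem entranceTransfer_apply_sub_of_mem {x : α} (hx : x ∈ Y) {r : ℕ} (hr : 1 ≤ r)
    (hret : T^[r] x ∈ Y) (hmin : ∀ m, 1 ≤ m → m < r → T^[m] x ∉ Y)
    (hcob : birkhoffSum T f r x = hhat (T^[r] x) - hhat x) :
    entranceTransfer T Y f hhat (T x) - entranceTransfer T Y f hhat x = f x := by
  obtain ⟨n, rfl⟩ : ∃ n, r = n + 1 := ⟨r - 1, by omega⟩
  rw [iterate_succ_apply] at hret hcob
  rw [birkhoffSum_succ'] at hcob
  have hmin' : ∀ k < n, T^[k] (T x) ∉ Y := fun k hk => by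
    simpa only [iterate_succ_apply] using hmin (k + 1) (by omega) (by omega)
  rw [entranceTransfer_of_mem f hhat hx, entranceTransfer_eq f hhat hret hmin']
  calc _ = (hhat (T^[n] (T x)) - hhat x) - birkhoffSum T f n (T x) := by abel
    _ = f x := by rw [← hcob]; abel

end EntranceTransfer

section Recurrence

variable {α : Type*} {T : α → α} {Y : Set α}

theorem preimage_setOf_exists_iterate_mem (hrec : ∀ x ∈ Y, ∃ n, 1 ≤ n ∧ T^[n] x ∈ Y) :
    T ⁻¹' {x | ∃ m, T^[m] x ∈ Y} = {x | ∃ m, T^[m] x ∈ Y} := by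
  ext x
  constructor
  · rintro ⟨m, hm⟩
    exact ⟨m + 1, by rwa [iterate_succ_apply]⟩
  · rintro ⟨_ | m, hm⟩
    · obtain ⟨n, hn1, hn⟩ := hrec x hm
      refine ⟨n - 1, ?_⟩
      rwa [← iterate_succ_apply, Nat.succ_eq_add_one, Nat.sub_add_cancel hn1]
    · exact ⟨m, by rwa [← iterate_succ_apply]⟩

theorem PreErgodic.ae_exists_iterate_mem [MeasurableSpace α] {μ : Measure α}
    (hT : PreErgodic T μ) (hTm : Measurable T) (hY : MeasurableSet Y) (hμY : μ Y ≠ 0)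
    (hrec : ∀ x ∈ Y, ∃ n, 1 ≤ n ∧ T^[n] x ∈ Y) :
    ∀ᵐ x ∂μ, ∃ m, T^[m] x ∈ Y := by
  have hA : MeasurableSet {x | ∃ m, T^[m] x ∈ Y} := by
    rw [Set.ofPred_exists]
    exact MeasurableSet.iUnion fun m => hTm.iterate m hY
  refine (hT.ae_mem_or_ae_notMem hA (preimage_setOf_exists_iterate_mem hrec)).resolve_right ?_
  intro hnull
  have hYA : Y ⊆ {x | ∃ m, T^[m] x ∈ Y} := fun x hx => ⟨0, hx⟩
  exact hμY (measure_mono_null hYA (measure_eq_zero_iff_ae_notMem.2 hnull))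

end Recurrence

theorem induced_coboundary_extends_general
    {X : Type*} [MeasurableSpace X] (ν : Measure X)
    (T : X ≃ X)
    (hErg : Ergodic T ν)
    (Y : Set X) (hYmeas : MeasurableSet Y) (hYpos : ν Y ≠ 0)
    (r : X → ℕ)
    (hr : ∀ x ∈ Y, 1 ≤ r x ∧ (⇑T)^[r x] x ∈ Y ∧
      ∀ m : ℕ, 1 ≤ m → m < r x → (⇑T)^[m] x ∉ Y)
    (f : X → ℝ)
    (fhat : X → ℝ) (hfhat : ∀ x ∈ Y, fhat x = ∑ j ∈ Finset.range (r x), f ((⇑T)^[j] x))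
    (hhat : X → ℝ) (hcob : ∀ x ∈ Y, fhat x = hhat ((⇑T)^[r x] x) - hhat x) :
    ∃ h : X → ℝ, ∀ᵐ y ∂ν, f y = h (T y) - h y := by
  have hrec : ∀ x ∈ Y, ∃ n, 1 ≤ n ∧ T^[n] x ∈ Y := fun x hx => ⟨r x, (hr x hx).1, (hr x hx).2.1⟩
  refine ⟨entranceTransfer T Y f hhat, ?_⟩
  filter_upwards [hErg.toPreErgodic.ae_exists_iterate_mem hErg.measurable hYmeas hYpos hrec]
    with x hx
  by_cases hxY : x ∈ Y
  · obtain ⟨hr1, hret, hmin⟩ := hr x hxY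
    exact (entranceTransfer_apply_sub_of_mem f hhat hxY hr1 hret hmin
      ((hfhat x hxY).symm.trans (hcob x hxY))).symm
  · exact (entranceTransfer_apply_sub_of_notMem f hhat hxY
      ((preimage_setOf_exists_iterate_mem hrec).symm.subset hx)).symm

/-- If the induced cocycle `f̂ x = ∑_{j<r x} f (T^j x)` over the first return map
`T̃ = T^[r ·]` to `Y` is a coboundary (with transfer function `ĥ`), then `f` is a
coboundary for `T` almost everywhere. -/
theorem induced_coboundary_extends
    {X : Type*} [MeasurableSpace X] (ν : Measure X) [IsProbabilityMeasure ν]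
    (T : X ≃ X) (hTmeas : Measurable T) (hTinvmeas : Measurable T.symm)
    (hErg : Ergodic T ν)
    (Y : Set X) (hYmeas : MeasurableSet Y) (hYpos : ν Y ≠ 0)
    (r : X → ℕ)
    (hr : ∀ x ∈ Y, 1 ≤ r x ∧ (⇑T)^[r x] x ∈ Y ∧
      ∀ m : ℕ, 1 ≤ m → m < r x → (⇑T)^[m] x ∉ Y)
    (f : X → ℝ) (hfmeas : Measurable f)
    (fhat : X → ℝ) (hfhat : ∀ x ∈ Y, fhat x = ∑ j ∈ Finset.range (r x), f ((⇑T)^[j] x))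
    (hhat : X → ℝ) (hcob : ∀ x ∈ Y, fhat x = hhat ((⇑T)^[r x] x) - hhat x) :
    ∃ h : X → ℝ, ∀ᵐ y ∂ν, f y = h (T y) - h y :=
  induced_coboundary_extends_general ν T hErg Y hYmeas hYpos r hr f fhat hfhat hhat hcob
end

section
/- The set of essential values Ess(T_f) of a real-valued cocycle f over an ergodic invertible measure-preserving transformation T of a probability space is a closed subgroup of ℝ. -/
open MeasureTheory

variable {X : Type*} [MeasurableSpace X]

/-- Birkhoff sums `S_n f` for `n ∈ ℤ` over an invertible transformation. -/
noncomputable def birkhoffZ (T : Equiv.Perm X) (f : X → ℝ) (n : ℤ) (x : X) : ℝ :=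
  if 0 ≤ n then ∑ k ∈ Finset.range n.toNat, f ((T ^ (k : ℤ)) x)
  else -∑ k ∈ Finset.range (-n).toNat, f ((T ^ (-(k : ℤ) - 1)) x)

/-- The set of essential values of the cocycle `f` over `T`. -/
def essentialValues (μ : Measure X) (T : Equiv.Perm X) (f : X → ℝ) : Set ℝ :=
  {a : ℝ | ∀ B : Set X, MeasurableSet B → μ B ≠ 0 → ∀ ε : ℝ, 0 < ε → ∃ n : ℤ,
    μ (B ∩ (⇑(T ^ n)) ⁻¹' B ∩ {x : X | |birkhoffZ T f n x - a| < ε}) ≠ 0}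

/-! A set witnessing `b` to within `ε / 2` witnesses every `a` within `ε / 2` of `b`, so the
essential values form a closed set. The group structure comes from the cocycle identity
`S_{m+n} f = S_m f + S_n f ∘ T^m`: applying the definition for `a` to the positive-measure set of
returns witnessing `b` yields returns witnessing `a + b`, and moving the returns witnessing `a` by
the measure-preserving map `T^(-n)` yields returns witnessing `-a`. -/

namespace Equiv.Perm

variable {T : Equiv.Perm X}

theorem measurable_zpow (hT : Measurable T) (hT' : Measurable ⇑T⁻¹) :
    ∀ n : ℤ, Measurable ⇑(T ^ n)
  | (n : ℕ) => by simpa only [zpow_natCast, coe_pow] using hT.iterate n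
  | .negSucc n => by simpa only [zpow_negSucc, ← inv_pow, coe_pow] using hT'.iterate (n + 1)

theorem measurePreserving_zpow {μ : Measure X} (hT : MeasurePreserving T μ μ)
    (hT' : Measurable ⇑T⁻¹) : ∀ n : ℤ, MeasurePreserving ⇑(T ^ n) μ μ
  | (n : ℕ) => by simpa only [zpow_natCast, coe_pow] using hT.iterate n
  | .negSucc n => by
    have hT_inv : MeasurePreserving ⇑T⁻¹ μ μ :=
      MeasurePreserving.symm ⟨T, hT.measurable, hT'⟩ hT
    simpa only [zpow_negSucc, ← inv_pow, coe_pow] using hT_inv.iterate (n + 1)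

end Equiv.Perm

section Birkhoff

omit [MeasurableSpace X]

variable (T : Equiv.Perm X) (f : X → ℝ)

@[simp]
theorem birkhoffZ_zero (x : X) : birkhoffZ T f 0 x = 0 := by
  simp [birkhoffZ]

theorem birkhoffZ_of_nonpos {n : ℤ} (hn : n ≤ 0) (x : X) :
    birkhoffZ T f n x = -∑ k ∈ Finset.range (-n).toNat, f ((T ^ (-(k : ℤ) - 1)) x) := by
  rcases hn.eq_or_lt with rfl | hn
  · simp
  · exact if_neg hn.not_ge

theorem birkhoffZ_add_one (n : ℤ) (x : X) :
    birkhoffZ T f (n + 1) x = birkhoffZ T f n x + f ((T ^ n) x) := by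
  rcases le_or_gt 0 n with hn | hn
  · rw [birkhoffZ, if_pos (by omega), birkhoffZ, if_pos hn,
      show (n + 1).toNat = n.toNat + 1 by omega, Finset.sum_range_succ, Int.toNat_of_nonneg hn]
  · rw [birkhoffZ_of_nonpos T f hn.le, birkhoffZ_of_nonpos T f (by omega),
      show (-n).toNat = (-(n + 1)).toNat + 1 by omega, Finset.sum_range_succ,
      show -(((-(n + 1)).toNat : ℕ) : ℤ) - 1 = n by omega]
    ring

theorem birkhoffZ_add (m n : ℤ) (x : X) :
    birkhoffZ T f (m + n) x = birkhoffZ T f m x + birkhoffZ T f n ((T ^ m) x) := by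
  have zpow_add_apply (k : ℤ) : (T ^ (m + k)) x = (T ^ k) ((T ^ m) x) := by
    rw [add_comm, zpow_add, Equiv.Perm.mul_apply]
  induction n using Int.induction_on with
  | zero => simp
  | succ k ih => rw [← add_assoc, birkhoffZ_add_one, ih, birkhoffZ_add_one, zpow_add_apply]; ring
  | pred k ih =>
    have h := birkhoffZ_add_one T f (m + (-k - 1)) x
    have h' := birkhoffZ_add_one T f (-k - 1) ((T ^ m) x)
    rw [zpow_add_apply, show m + (-k - 1) + 1 = m + -k by ring] at h
    rw [show (-k - 1 : ℤ) + 1 = -k by ring] at h'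
    linarith

theorem birkhoffZ_neg (n : ℤ) (x : X) :
    birkhoffZ T f (-n) x = -birkhoffZ T f n ((T ^ (-n)) x) := by
  have := birkhoffZ_add T f (-n) n x
  rw [neg_add_cancel, birkhoffZ_zero] at this
  linarith

end Birkhoff

section RecurrenceSet

omit [MeasurableSpace X]

def recurrenceSet (T : Equiv.Perm X) (f : X → ℝ) (B : Set X) (n : ℤ) (a ε : ℝ) : Set X :=
  B ∩ ⇑(T ^ n) ⁻¹' B ∩ {x | |birkhoffZ T f n x - a| < ε}

variable {T : Equiv.Perm X} {f : X → ℝ}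

theorem recurrenceSet_subset_of_abs_sub_add_le {B : Set X} {n : ℤ} {a b δ ε : ℝ}
    (h : |b - a| + δ ≤ ε) : recurrenceSet T f B n b δ ⊆ recurrenceSet T f B n a ε := by
  rintro x ⟨hxB, hx⟩
  refine ⟨hxB, ?_⟩
  calc |birkhoffZ T f n x - a| ≤ |birkhoffZ T f n x - b| + |b - a| := abs_sub_le _ _ _
    _ < ε := by linarith [hx.out]

theorem preimage_zpow_neg_recurrenceSet (B : Set X) (n : ℤ) (a ε : ℝ) :
    ⇑(T ^ (-n)) ⁻¹' recurrenceSet T f B n a ε = recurrenceSet T f B (-n) (-a) ε := by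
  ext x
  have h_cancel : (T ^ n) ((T ^ (-n)) x) = x := by
    rw [← Equiv.Perm.mul_apply, ← zpow_add, add_neg_cancel, zpow_zero, Equiv.Perm.one_apply]
  have h_sum : |birkhoffZ T f n ((T ^ (-n)) x) - a| = |birkhoffZ T f (-n) x - -a| := by
    rw [birkhoffZ_neg T f n x, ← abs_neg]
    ring_nf
  change ((T ^ (-n)) x ∈ B ∧ (T ^ n) ((T ^ (-n)) x) ∈ B) ∧ _ < ε ↔
    (x ∈ B ∧ _) ∧ _ < ε
  rw [h_cancel, h_sum, and_comm (a := _ ∈ B)]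
  exact Iff.rfl

theorem recurrenceSet_recurrenceSet_subset (B : Set X) (m n : ℤ) (a b δ ε : ℝ) :
    recurrenceSet T f (recurrenceSet T f B n b δ) m a ε ⊆
      recurrenceSet T f B (m + n) (a + b) (ε + δ) := by
  rintro x ⟨⟨⟨⟨hxB, -⟩, -⟩, ⟨-, hTnTmB⟩, hS_n⟩, hS_m⟩
  have hcomp : (T ^ (m + n)) x = (T ^ n) ((T ^ m) x) := by
    rw [add_comm, zpow_add, Equiv.Perm.mul_apply]
  refine ⟨⟨hxB, by rwa [Set.mem_preimage, hcomp]⟩, ?_⟩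
  calc |birkhoffZ T f (m + n) x - (a + b)|
      = |(birkhoffZ T f m x - a) + (birkhoffZ T f n ((T ^ m) x) - b)| := by
        rw [birkhoffZ_add]; ring_nf
    _ ≤ |birkhoffZ T f m x - a| + |birkhoffZ T f n ((T ^ m) x) - b| := abs_add_le _ _
    _ < ε + δ := add_lt_add hS_m hS_n

end RecurrenceSet

section EssentialValues

variable {μ : Measure X} {T : Equiv.Perm X} {f : X → ℝ}

theorem measurable_birkhoffZ (hT : Measurable T) (hT' : Measurable ⇑T⁻¹)
    (hf : Measurable f) (n : ℤ) : Measurable (birkhoffZ T f n) := by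
  unfold birkhoffZ
  split_ifs
  · exact Finset.measurable_sum _ fun k _ => hf.comp (Equiv.Perm.measurable_zpow hT hT' _)
  · exact (Finset.measurable_sum _ fun k _ => hf.comp (Equiv.Perm.measurable_zpow hT hT' _)).neg

theorem measurableSet_recurrenceSet (hT : Measurable T) (hT' : Measurable ⇑T⁻¹)
    (hf : Measurable f) {B : Set X} (hB : MeasurableSet B) (n : ℤ) (a ε : ℝ) :
    MeasurableSet (recurrenceSet T f B n a ε) :=
  (hB.inter (Equiv.Perm.measurable_zpow hT hT' n hB)).inter <|
    measurableSet_lt ((measurable_birkhoffZ hT hT' hf n).sub_const a).abs measurable_const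

variable (μ T f) in
theorem isClosed_essentialValues : IsClosed (essentialValues μ T f) := by
  refine isClosed_of_closure_subset fun a ha B hB hB0 ε hε => ?_
  obtain ⟨b, hb, hab⟩ := Metric.mem_closure_iff.mp ha (ε / 2) (half_pos hε)
  obtain ⟨n, hn⟩ := hb B hB hB0 (ε / 2) (half_pos hε)
  refine ⟨n, fun h0 => hn (measure_mono_null (recurrenceSet_subset_of_abs_sub_add_le ?_) h0)⟩
  rw [abs_sub_comm, ← Real.dist_eq]
  linarith

variable (μ T f) in
theorem zero_mem_essentialValues : (0 : ℝ) ∈ essentialValues μ T f := by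
  refine fun B _ hB0 ε hε => ⟨0, ?_⟩
  simpa [hε] using hB0

theorem neg_mem_essentialValues (hT : MeasurePreserving T μ μ) (hT' : Measurable ⇑T⁻¹)
    (hf : Measurable f) {a : ℝ} (ha : a ∈ essentialValues μ T f) :
    -a ∈ essentialValues μ T f := by
  intro B hB hB0 ε hε
  obtain ⟨n, hn⟩ := ha B hB hB0 ε hε
  refine ⟨-n, show μ (recurrenceSet T f B (-n) (-a) ε) ≠ 0 from ?_⟩
  rwa [← preimage_zpow_neg_recurrenceSet,
    (Equiv.Perm.measurePreserving_zpow hT hT' (-n)).measure_preimage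
      (measurableSet_recurrenceSet hT.measurable hT' hf hB n a ε).nullMeasurableSet]

theorem add_mem_essentialValues (hT : Measurable T) (hT' : Measurable ⇑T⁻¹)
    (hf : Measurable f) {a b : ℝ} (ha : a ∈ essentialValues μ T f)
    (hb : b ∈ essentialValues μ T f) : a + b ∈ essentialValues μ T f := by
  intro B hB hB0 ε hε
  obtain ⟨n, hn⟩ := hb B hB hB0 (ε / 2) (half_pos hε)
  obtain ⟨m, hm⟩ := ha _ (measurableSet_recurrenceSet hT hT' hf hB n b (ε / 2)) hn (ε / 2)
    (half_pos hε)
  have h_sub := recurrenceSet_recurrenceSet_subset (T := T) (f := f) B m n a b (ε / 2) (ε / 2)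
  rw [add_halves] at h_sub
  exact ⟨m + n, fun h0 => hm (measure_mono_null h_sub h0)⟩

def essentialValuesAddSubgroup (hT : MeasurePreserving T μ μ) (hT' : Measurable ⇑T⁻¹)
    (hf : Measurable f) : AddSubgroup ℝ where
  carrier := essentialValues μ T f
  zero_mem' := zero_mem_essentialValues μ T f
  add_mem' := add_mem_essentialValues hT.measurable hT' hf
  neg_mem' := neg_mem_essentialValues hT hT' hf

end EssentialValues

theorem essentialValues_closed_subgroup_general
    (μ : Measure X)
    (T : Equiv.Perm X) (hTinvmeas : Measurable ⇑T⁻¹)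
    (hTpres : MeasurePreserving T μ μ)
    (f : X → ℝ) (hfmeas : Measurable f) :
    IsClosed (essentialValues μ T f) ∧
      ∃ H : AddSubgroup ℝ, (H : Set ℝ) = essentialValues μ T f :=
  ⟨isClosed_essentialValues μ T f, essentialValuesAddSubgroup hTpres hTinvmeas hfmeas, rfl⟩

/-- The set of essential values of a measurable cocycle over an ergodic invertible
measure-preserving transformation of a probability space is a closed subgroup of `ℝ`. -/
theorem essentialValues_closed_subgroup
    (μ : Measure X) [IsProbabilityMeasure μ]
    (T : Equiv.Perm X) (hTmeas : Measurable ⇑T) (hTinvmeas : Measurable ⇑T⁻¹)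
    (hTpres : MeasurePreserving T μ μ) (hTerg : Ergodic T μ)
    (f : X → ℝ) (hfmeas : Measurable f) :
    IsClosed (essentialValues μ T f) ∧
      ∃ H : AddSubgroup ℝ, (H : Set ℝ) = essentialValues μ T f :=
  essentialValues_closed_subgroup_general μ T hTinvmeas hTpres f hfmeas
end

section
/- If T: X → X is conservative measure-preserving with respect to a σ-finite measure m, A ⊂ X has m(A) > 0, the induced (first return) map T_A is ergodic with respect to m restricted to A, and X = ⋃_{n≥1} T⁻ⁿA up to a null set, then T is ergodic with respect to m. -/
open MeasureTheory

variable {X : Type*} [MeasurableSpace X]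

/-- First return time of `x` to `A` under `T` (junk value `0` if `x` never returns). -/
noncomputable def firstReturnTime (T : X → X) (A : Set X) (x : X) : ℕ :=
  sInf {n : ℕ | 1 ≤ n ∧ T^[n] x ∈ A}

/-- The first return (induced) map of `T` on `A`. -/
noncomputable def inducedMap (T : X → X) (A : Set X) (x : X) : X :=
  T^[firstReturnTime T A x] x

/-- If `T` is conservative measure-preserving, the induced map `T_A` is ergodic w.r.t.
`m|_A` and `X = ⋃_{n ≥ 1} T⁻ⁿ A` up to a null set, then `T` is ergodic w.r.t. `m`. -/
theorem ergodic_of_induced_ergodic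
    (m : Measure X) [SigmaFinite m]
    (T : X → X) (hTmeas : Measurable T) (hTpres : MeasurePreserving T m m)
    (hTcons : Conservative T m)
    (A : Set X) (hAmeas : MeasurableSet A) (hApos : m A ≠ 0)
    (hInd : Ergodic (inducedMap T A) (m.restrict A))
    (hSweep : m (⋃ n : ℕ, T^[n + 1] ⁻¹' A)ᶜ = 0) :
    Ergodic T m := by
  -- key: an invariant measurable set meeting A in a null set is null
  have key : ∀ S : Set X, MeasurableSet S → (∀ n : ℕ, T^[n] ⁻¹' S = S) →
      m (S ∩ A) = 0 → m S = 0 := by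
    intro S hSmeas hSn h0
    have hsub : S ⊆ (⋃ n : ℕ, T^[n + 1] ⁻¹' A)ᶜ ∪ ⋃ n : ℕ, T^[n + 1] ⁻¹' (S ∩ A) := by
      intro x hx
      by_cases hxU : x ∈ ⋃ n : ℕ, T^[n + 1] ⁻¹' A
      · right
        obtain ⟨n, hn⟩ := Set.mem_iUnion.mp hxU
        refine Set.mem_iUnion.mpr ⟨n, ?_⟩
        have hxS : T^[n + 1] x ∈ S := by
          rw [← hSn (n + 1)] at hx; exact hx
        exact ⟨hxS, hn⟩
      · exact Or.inl hxU
    have hle : m S ≤ m (⋃ n : ℕ, T^[n + 1] ⁻¹' A)ᶜ + m (⋃ n : ℕ, T^[n + 1] ⁻¹' (S ∩ A)) :=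
      (measure_mono hsub).trans (measure_union_le _ _)
    have hU : m (⋃ n : ℕ, T^[n + 1] ⁻¹' (S ∩ A)) = 0 := by
      refine measure_iUnion_null fun n => ?_
      have hp := (hTpres.iterate (n + 1)).measure_preimage
        (hSmeas.inter hAmeas).nullMeasurableSet
      rw [hp]; exact h0
    rw [hSweep, hU, add_zero] at hle
    exact le_antisymm hle bot_le
  refine ⟨hTpres, ⟨?_⟩⟩
  intro S hSmeas hS
  have hSn : ∀ n : ℕ, T^[n] ⁻¹' S = S := fun n => by
    rw [Set.preimage_iterate_eq]; exact Function.iterate_fixed hS n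
  have hScn : ∀ n : ℕ, T^[n] ⁻¹' Sᶜ = Sᶜ := fun n => by
    rw [Set.preimage_compl, hSn n]
  have hind : inducedMap T A ⁻¹' S = S := by
    ext x
    simp only [Set.mem_preimage, inducedMap]
    exact Set.ext_iff.mp (hSn (firstReturnTime T A x)) x
  rw [Filter.eventuallyConst_set']
  rcases hInd.ae_empty_or_univ hSmeas hind with h | h
  · left
    rw [ae_eq_empty] at h ⊢
    rw [Measure.restrict_apply hSmeas] at h
    exact key S hSmeas hSn h
  · right
    rw [ae_eq_univ] at h ⊢
    rw [Measure.restrict_apply hSmeas.compl] at h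
    exact key Sᶜ hSmeas.compl hScn h
end
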